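/- (Theorem 8, second part) For all m, n ∈ ℕ with m + n ≥ 1, Σ_{l=0}^{m+n} C(n+m,l)·(−1)^l·ξ_{l,q} = q²·ξ_{n+m,1/q} + [2]_q, where ξ_{j,1/q} denotes the q-Euler number with parameter 1/q in place of q. -/

import Mathlib

open Finset Filter

/-- `[a]_q = (1 - q^a)/(1 - q)` for `a : ℤ`. -/
noncomputable def qnum {p : ℕ} [Fact p.Prime] (q : ℚ_[p]) (a : ℤ) : ℚ_[p] :=
  (1 - q ^ a) / (1 - q)

/-- Kim's q-Euler polynomial `ξ_{n,q}(x)` (closed form). -/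
noncomputable def xi {p : ℕ} [Fact p.Prime] (q : ℚ_[p]) (n : ℕ) (x : ℤ) : ℚ_[p] :=
  ((1 + q) / (1 - q) ^ n) *
    ∑ l ∈ Finset.range (n + 1),
      (n.choose l : ℚ_[p]) * (-1) ^ l * q ^ ((l : ℤ) * x) / (1 + q ^ (l + 1))

/-- The fermionic p-adic `r`-integral statement:
`∫_{ℤ_p} g dμ_{-r} = L` means the Riemann-type sums
`(1/[p^N]_{-r}) · Σ_{x=0}^{p^N-1} g(x) (-r)^x` converge to `L`. -/
def fermionicIntegral (p : ℕ) [Fact p.Prime] (r : ℚ_[p]) (g : ℕ → ℚ_[p]) (L : ℚ_[p]) : Prop :=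
  Filter.Tendsto
    (fun N : ℕ => ((1 + r) / (1 - (-r) ^ (p ^ N))) * ∑ x ∈ Finset.range (p ^ N), g x * (-r) ^ x)
    Filter.atTop (nhds L)

/-- The q-Bernstein polynomial `B_{k,n}(x,q) = C(n,k) [x]_q^k [1-x]_{1/q}^{n-k}`. -/
noncomputable def bern {p : ℕ} [Fact p.Prime] (q : ℚ_[p]) (k n : ℕ) (x : ℤ) : ℚ_[p] :=
  (n.choose k : ℚ_[p]) * (qnum q x) ^ k * (qnum q⁻¹ (1 - x)) ^ (n - k)

/-! With `w = (1 - q)⁻¹` and `c j = [2]_q / (1 + q^(j+1))`, the number `ξ_{l,q}` is `w^l` times the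
binomial transform of `(-1)^j c j`. Composing two binomial transforms and using `1 - w = -q w`
collapses the left side to `w^N ∑ C(N,j) (-q)^(N-j) c j`, while inverting `q` turns `q² ξ_{N,1/q}`
into the same sum with weights `q^(2j+2)`. The difference has summands
`C(N,j) (-q)^(N-j) [2]_q (1 - q^(j+1))`, which add up to `[2]_q (1 - q)^N` by the binomial theorem
once `N ≥ 1`. The denominators `1 + q^(j+1)` never vanish, since `q^k - 1` is `q - 1` times a sum of
powers of `q` and so has norm `< 1`, whereas `‖2‖ = 1` for odd `p`. -/

section BinomialTransform

variable {R : Type*} [CommRing R]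

theorem sum_choose_mul_pow_mul_sum_choose (x : R) (c : ℕ → R) (N : ℕ) :
    ∑ l ∈ range (N + 1), (N.choose l : R) * x ^ l * ∑ j ∈ range (l + 1), (l.choose j : R) * c j
      = ∑ j ∈ range (N + 1), (N.choose j : R) * x ^ j * (1 + x) ^ (N - j) * c j := by
  simp_rw [mul_sum, range_eq_Ico]
  rw [← sum_Ico_Ico_comm (f := fun j l => (N.choose l : R) * x ^ l * ((l.choose j : R) * c j))]
  refine sum_congr rfl fun j hj => ?_
  have hjN : j ≤ N := Nat.lt_succ_iff.mp (mem_Ico.mp hj).2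
  rw [sum_Ico_eq_sum_range, show N + 1 - j = N - j + 1 by omega, add_comm (1 : R), add_pow,
    mul_sum, sum_mul]
  refine sum_congr rfl fun k _ => ?_
  have hchoose : (N.choose (j + k) : R) * ((j + k).choose j) = N.choose j * (N - j).choose k := by
    rw [← Nat.cast_mul, ← Nat.cast_mul, Nat.choose_mul (Nat.le_add_right j k),
      Nat.add_sub_cancel_left]
  rw [one_pow, mul_one, pow_add]
  linear_combination x ^ j * x ^ k * c j * hchoose

theorem sum_choose_mul_neg_pow_mul_one_sub_pow_succ (q : R) {N : ℕ} (hN : N ≠ 0) :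
    ∑ j ∈ range (N + 1), (N.choose j : R) * (-q) ^ (N - j) * (1 - q ^ (j + 1)) = (1 - q) ^ N :=
  calc _ = ∑ j ∈ range (N + 1), 1 ^ j * (-q) ^ (N - j) * (N.choose j : R)
          - q * ∑ j ∈ range (N + 1), q ^ j * (-q) ^ (N - j) * (N.choose j : R) := by
        rw [mul_sum, ← sum_sub_distrib]
        exact sum_congr rfl fun j _ => by ring
    _ = (1 - q) ^ N := by
        rw [← add_pow, ← add_pow, add_neg_cancel, zero_pow hN, mul_zero, sub_zero, sub_eq_add_neg]

end BinomialTransform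

theorem neg_one_pow_sq {R : Type*} [Monoid R] [HasDistribNeg R] (n : ℕ) :
    ((-1 : R) ^ n) ^ 2 = 1 := by
  rw [pow_right_comm, neg_one_sq, one_pow]

theorem one_add_pow_ne_zero_of_norm_sub_lt_one {R : Type*} [NormedCommRing R] [NormOneClass R]
    [IsUltrametricDist R] (h2 : ‖(2 : R)‖ = 1) {q : R} (hq : ‖1 - q‖ < 1) (k : ℕ) :
    1 + q ^ k ≠ 0 := by
  intro h
  have hq_le : ‖q‖ ≤ 1 := by
    simpa [← norm_neg (q - 1), hq.le] using IsUltrametricDist.norm_add_one_le_max_norm_one (q - 1)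
  have hgeom : ‖∑ i ∈ range k, q ^ i‖ ≤ 1 :=
    IsUltrametricDist.norm_sum_le_of_forall_le_of_nonneg zero_le_one fun i _ =>
      (norm_pow_le q i).trans (pow_le_one₀ (norm_nonneg q) hq_le)
  have : ‖q ^ k - 1‖ < 1 := by
    rw [← geom_sum_mul, ← neg_sub 1 q, mul_neg, norm_neg]
    calc ‖(∑ i ∈ range k, q ^ i) * (1 - q)‖ ≤ 1 * ‖1 - q‖ :=
          (norm_mul_le _ _).trans (mul_le_mul_of_nonneg_right hgeom (norm_nonneg _))
      _ < 1 := by rwa [one_mul]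
  rw [show q ^ k - 1 = -2 by linear_combination h, norm_neg, h2] at this
  exact this.false

theorem Padic.norm_two_eq_one_of_odd {p : ℕ} [Fact p.Prime] (hp : Odd p) : ‖(2 : ℚ_[p])‖ = 1 :=
  mod_cast Padic.norm_natCast_eq_one_iff.mpr (Nat.coprime_two_right.mpr hp)

section EulerNumbers

variable {p : ℕ} [Fact p.Prime]

theorem xi_zero (q : ℚ_[p]) (n : ℕ) :
    xi q n 0 = (1 - q)⁻¹ ^ n *
      ∑ j ∈ range (n + 1), (n.choose j : ℚ_[p]) * ((-1) ^ j * ((1 + q) / (1 + q ^ (j + 1)))) := by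
  simp only [xi, mul_sum, mul_zero, zpow_zero]
  refine sum_congr rfl fun j _ => ?_
  ring

theorem sum_choose_mul_neg_one_pow_mul_xi_zero {q : ℚ_[p]} (hq1 : q ≠ 1) (N : ℕ) :
    ∑ l ∈ range (N + 1), (N.choose l : ℚ_[p]) * (-1) ^ l * xi q l 0
      = (1 - q)⁻¹ ^ N * ∑ j ∈ range (N + 1),
          (N.choose j : ℚ_[p]) * (-q) ^ (N - j) * ((1 + q) / (1 + q ^ (j + 1))) := by
  set w := (1 - q)⁻¹
  have h1w : 1 + -w = -q * w := by
    linear_combination (-1 : ℚ_[p]) * mul_inv_cancel₀ (sub_ne_zero.mpr hq1.symm)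
  calc _ = ∑ l ∈ range (N + 1), (N.choose l : ℚ_[p]) * (-w) ^ l * ∑ j ∈ range (l + 1),
            (l.choose j : ℚ_[p]) * ((-1) ^ j * ((1 + q) / (1 + q ^ (j + 1)))) :=
        sum_congr rfl fun l _ => by rw [xi_zero, neg_pow]; ring
    _ = _ := by
        rw [sum_choose_mul_pow_mul_sum_choose, h1w, mul_sum]
        refine sum_congr rfl fun j hj => ?_
        rw [← Nat.sub_add_cancel (Nat.lt_succ_iff.mp (mem_range.mp hj)), Nat.add_sub_cancel,
          neg_pow w]
        linear_combination ((N - j + j).choose j : ℚ_[p]) * w ^ (N - j + j) * (-q) ^ (N - j) *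
          ((1 + q) / (1 + q ^ (j + 1))) * neg_one_pow_sq (R := ℚ_[p]) j

theorem sq_mul_xi_inv_zero {q : ℚ_[p]} (hq0 : q ≠ 0) (N : ℕ) :
    q ^ 2 * xi q⁻¹ N 0 = (1 - q)⁻¹ ^ N * ∑ j ∈ range (N + 1), (N.choose j : ℚ_[p]) *
      (-q) ^ (N - j) * (q ^ (j + 1)) ^ 2 * ((1 + q) / (1 + q ^ (j + 1))) := by
  have hinv : (1 - q⁻¹)⁻¹ = -q * (1 - q)⁻¹ := by
    rw [show 1 - q⁻¹ = -(1 - q) * q⁻¹ by rw [neg_sub, sub_mul, mul_inv_cancel₀ hq0, one_mul],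
      mul_inv, inv_neg, inv_inv, neg_mul, mul_comm, neg_mul]
  have hfrac (j : ℕ) :
      (1 + q⁻¹) / (1 + q⁻¹ ^ (j + 1)) = q ^ j * ((1 + q) / (1 + q ^ (j + 1))) := by
    rw [inv_pow]
    field_simp
    ring
  rw [xi_zero, hinv, mul_sum, mul_sum, mul_sum]
  refine sum_congr rfl fun j hj => ?_
  rw [hfrac, ← Nat.sub_add_cancel (Nat.lt_succ_iff.mp (mem_range.mp hj)), Nat.add_sub_cancel]
  linear_combination (1 - q)⁻¹ ^ (N - j + j) * ((N - j + j).choose j : ℚ_[p]) * (-q) ^ (N - j) *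
    (q ^ (j + 1)) ^ 2 * ((1 + q) / (1 + q ^ (j + 1))) * neg_one_pow_sq (R := ℚ_[p]) j

end EulerNumbers

theorem stmt17 (p : ℕ) [Fact p.Prime] (hp : Odd p) (q : ℚ_[p]) (hq : ‖1 - q‖ < 1) (hq1 : q ≠ 1) (m n : ℕ) (hmn : 1 ≤ m + n) :
    ∑ l ∈ Finset.range (m + n + 1), ((n + m).choose l : ℚ_[p]) * (-1) ^ l * xi q l 0
      = q ^ 2 * xi q⁻¹ (n + m) 0 + (1 + q) := by
  have hq0 : q ≠ 0 := by rintro rfl; simp at hq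
  have hden := one_add_pow_ne_zero_of_norm_sub_lt_one (Padic.norm_two_eq_one_of_odd hp) hq
  have hterm (j : ℕ) : (1 + q) / (1 + q ^ (j + 1)) - (q ^ (j + 1)) ^ 2 *
      ((1 + q) / (1 + q ^ (j + 1))) = (1 - q ^ (j + 1)) * (1 + q) := by
    field_simp [hden (j + 1)]
    ring
  rw [add_comm m n, sum_choose_mul_neg_one_pow_mul_xi_zero hq1, sq_mul_xi_inv_zero hq0,
    ← sub_eq_iff_eq_add', ← mul_sub, ← sum_sub_distrib]
  simp only [mul_assoc _ ((q ^ _) ^ 2), ← mul_sub, hterm]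
  rw [← sum_congr rfl fun j _ => mul_assoc _ _ (1 + q), ← sum_mul,
    sum_choose_mul_neg_pow_mul_one_sub_pow_succ q (by omega), ← mul_assoc, ← mul_pow,
    inv_mul_cancel₀ (sub_ne_zero.mpr hq1.symm), one_pow, one_mul]
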